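/- arXiv:1404.4153 — 3 statements merged into one kernel-verified Lean document; each statement's English description precedes it below -/
import Mathlib

section
/- Let k, L > 1, κ : {1,…,k-1} × ℕ → ℤ/L, and a(n) the generalized Thue–Morse sequence of type (L,k,κ). If (a(n))_{n≥0} is not ultimately periodic, then for every N ≥ 0 and l > 0, the equally spaced subsequence (a(N + t·l))_{t≥0} is not ultimately periodic. -/
open scoped BigOperators

/-- The generalized Thue–Morse sequence of type (L,k,κ). -/
def gtm (k L : ℕ) (κ : ℕ → ℕ → ZMod L) (n : ℕ) : ZMod L :=
  ∑ y ∈ Finset.range (Nat.digits k n).length,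
    if (Nat.digits k n).getD y 0 ≠ 0 then κ ((Nat.digits k n).getD y 0) y else 0

/-!
Cutting off the lowest `F` base-`k` digits gives `a (s + k^F q) = a s + a_F q` for `s < k^F`, where
`a_F` is the sequence of the same type with weights `κ d (y + F)`. Suppose `a (N + t l)` has period
`j` for large `t`. Any `m ≡ N` modulo `g = gcd (k^l) l` can be written, by the Chinese remainder
theorem, as `m + c k^F = N + t l` with `k^F > m + j l` and `t` large; cancelling `a_F c` shows that
`a` has the period `j l` on the whole residue class of `N` mod `g`. As `g ∣ k^E` for `E ≥ l`, pick
`s < k^E ≤ s + j l` in that class: then `a (s + k^E q) = a (s + j l + k^E q)` says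
`a_E (q + 1) = a_E q + c` for a constant `c`, so `a_E` has period `L` and `a` has period `k^E L`.
-/

open Finset

namespace Nat

lemma dvd_pow_self_of_dvd_pow {d k F : ℕ} (hd : d ≠ 0) (hk : k ≠ 0) (h : d ∣ k ^ F) :
    d ∣ k ^ d := by
  rw [← factorization_le_iff_dvd hd (pow_ne_zero _ hk), factorization_pow]
  intro p
  rcases Nat.eq_zero_or_pos (d.factorization p) with h0 | hpos
  · simp [h0]
  have hp : p.Prime := prime_of_mem_primeFactors (Finsupp.mem_support_iff.2 hpos.ne')
  have hpk : 1 ≤ k.factorization p :=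
    (hp.dvd_iff_one_le_factorization hk).1
      (hp.dvd_of_dvd_pow ((dvd_of_factorization_pos hpos.ne').trans h))
  calc d.factorization p ≤ d := (factorization_lt p hd).le
    _ ≤ d * k.factorization p := le_mul_of_one_le_right (zero_le d) hpk

lemma gcd_pow_dvd_gcd_pow_self {k l : ℕ} (hk : k ≠ 0) (hl : l ≠ 0) (F : ℕ) :
    gcd (k ^ F) l ∣ gcd (k ^ l) l := by
  have hd : gcd (k ^ F) l ≠ 0 := gcd_ne_zero_right hl
  refine dvd_gcd ?_ (gcd_dvd_right _ _)
  exact (dvd_pow_self_of_dvd_pow hd hk (gcd_dvd_left _ _)).trans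
    (pow_dvd_pow k (le_of_dvd (Nat.pos_of_ne_zero hl) (gcd_dvd_right _ _)))

lemma exists_ge_modEq_modEq {a b n m : ℕ} (hn : n ≠ 0) (hm : m ≠ 0) (h : a ≡ b [MOD gcd n m])
    (B : ℕ) : ∃ x, B ≤ x ∧ x ≡ a [MOD n] ∧ x ≡ b [MOD m] := by
  obtain ⟨x, hxa, hxb⟩ := chineseRemainder' h
  refine ⟨x + n * m * B, ?_, ?_, ?_⟩
  · exact (Nat.le_mul_of_pos_left B (by positivity)).trans (Nat.le_add_left _ x)
  · rw [mul_assoc]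
    exact (add_mul_mod_self_left x n (m * B)).trans hxa
  · rw [mul_comm n m, mul_assoc]
    exact (add_mul_mod_self_left x m (n * B)).trans hxb

end Nat

section ThueMorse

variable {k L : ℕ} (κ : ℕ → ℕ → ZMod L)

lemma gtm_eq_sum_range (hk : 1 < k) {W n : ℕ} (hn : n < k ^ W) :
    gtm k L κ n = ∑ y ∈ range W, if n / k ^ y % k ≠ 0 then κ (n / k ^ y % k) y else 0 := by
  unfold gtm
  simp_rw [Nat.getD_digits _ _ hk]
  refine sum_subset (range_subset_range.2 ((Nat.digits_length_le_iff hk n).2 hn)) fun y _ hy => ?_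
  rw [mem_range, Nat.lt_digits_length_iff hk, not_le] at hy
  simp [Nat.div_eq_of_lt hy]

lemma gtm_add_pow_mul (hk : 1 < k) {F s : ℕ} (hs : s < k ^ F) (q : ℕ) :
    gtm k L κ (s + k ^ F * q) = gtm k L κ s + gtm k L (fun d y => κ d (y + F)) q := by
  obtain ⟨W, hq⟩ : ∃ W, q < k ^ W := ⟨q, Nat.lt_pow_self hk⟩
  have hsq : s + k ^ F * q < k ^ (F + W) := calc
    s + k ^ F * q < k ^ F * (q + 1) := by linarith
    _ ≤ k ^ F * k ^ W := Nat.mul_le_mul_left _ hq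
    _ = k ^ (F + W) := (pow_add ..).symm
  have low_digit : ∀ y < F, (s + k ^ F * q) / k ^ y % k = s / k ^ y % k := fun y hy => by
    have hFy : k ^ F = k ^ y * (k * k ^ (F - y - 1)) := by
      rw [← pow_succ', ← pow_add]
      congr 1
      omega
    have : k ^ F * q = k ^ y * (k * (k ^ (F - y - 1) * q)) := by rw [hFy]; ring
    rw [this, Nat.add_mul_div_left _ _ (by positivity), Nat.add_mul_mod_self_left]
  have high_digit : ∀ y, (s + k ^ F * q) / k ^ (F + y) % k = q / k ^ y % k := fun y => by
    rw [pow_add, ← Nat.div_div_eq_div_mul, Nat.add_mul_div_left _ _ (by positivity),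
      Nat.div_eq_of_lt hs, zero_add]
  rw [gtm_eq_sum_range κ hk hsq, gtm_eq_sum_range κ hk hs, gtm_eq_sum_range _ hk hq, sum_range_add]
  congr 1
  · exact sum_congr rfl fun y hy => by rw [low_digit y (mem_range.1 hy)]
  · exact sum_congr rfl fun y _ => by rw [high_digit y, add_comm F y]

lemma gtm_eq_gtm_add_of_modEq (hk : 1 < k) {N l M j : ℕ} (hl : 0 < l)
    (hper : ∀ t, M ≤ t → gtm k L κ (N + t * l) = gtm k L κ (N + (t + j) * l))
    {m : ℕ} (hm : m ≡ N [MOD Nat.gcd (k ^ l) l]) :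
    gtm k L κ m = gtm k L κ (m + j * l) := by
  set F := m + j * l
  have hF : m + j * l < k ^ F := Nat.lt_pow_self hk
  have hmF : m ≡ N [MOD Nat.gcd (k ^ F) l] :=
    Nat.ModEq.of_dvd (Nat.gcd_pow_dvd_gcd_pow_self (by omega) hl.ne' F) hm
  obtain ⟨x, hx, hxm, hxN⟩ :=
    Nat.exists_ge_modEq_modEq (by positivity) hl.ne' hmF (m + N + M * l)
  obtain ⟨c, hc⟩ := (Nat.modEq_iff_dvd' (by omega)).1 hxm.symm
  obtain ⟨t, ht⟩ := (Nat.modEq_iff_dvd' (by omega)).1 hxN.symm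
  have hMt : M ≤ t := Nat.le_of_mul_le_mul_left (c := l) (by rw [mul_comm l M]; omega) hl
  have h := hper t hMt
  rw [show N + t * l = m + k ^ F * c by rw [mul_comm t]; omega,
    show N + (t + j) * l = m + j * l + k ^ F * c by rw [add_mul, mul_comm t]; omega,
    gtm_add_pow_mul κ hk (by omega), gtm_add_pow_mul κ hk hF] at h
  exact add_right_cancel h

lemma exists_gtm_shift_succ (hk : 1 < k) {N l M j : ℕ} (hl : 0 < l) (hj : 0 < j)
    (hper : ∀ t, M ≤ t → gtm k L κ (N + t * l) = gtm k L κ (N + (t + j) * l)) :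
    ∃ E c, ∀ q, gtm k L (fun d y => κ d (y + E)) (q + 1) =
      gtm k L (fun d y => κ d (y + E)) q + c := by
  set g := Nat.gcd (k ^ l) l
  set E := j * l
  have hgl : g ≤ l := Nat.le_of_dvd hl (Nat.gcd_dvd_right _ _)
  have hg : 0 < g := Nat.gcd_pos_of_pos_right _ hl
  have hlE : l ≤ E := Nat.le_mul_of_pos_left l hj
  have hE : E < k ^ E := Nat.lt_pow_self hk
  have hgE : g ∣ k ^ E := (Nat.gcd_dvd_left _ _).trans (pow_dvd_pow k hlE)
  have hgkE : g ≤ k ^ E := by omega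
  set s := k ^ E - g + N % g
  have hNg : N % g < g := Nat.mod_lt N hg
  have hs : s ≡ N [MOD g] := by
    obtain ⟨u, hu⟩ := Nat.dvd_sub hgE (dvd_refl g)
    simp only [s, Nat.ModEq, hu, Nat.mul_add_mod, Nat.mod_mod]
  refine ⟨E, gtm k L κ s - gtm k L κ (s + E - k ^ E), fun q => ?_⟩
  have hsq : s + k ^ E * q ≡ N [MOD g] :=
    ((Nat.modEq_iff_dvd' (Nat.le_add_right s _)).2
      (by rw [Nat.add_sub_cancel_left]; exact hgE.mul_right q)).symm.trans hs
  have h := gtm_eq_gtm_add_of_modEq κ hk hl hper hsq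
  rw [show s + k ^ E * q + j * l = s + E - k ^ E + k ^ E * (q + 1) by rw [mul_add]; omega,
    gtm_add_pow_mul κ hk (by omega), gtm_add_pow_mul κ hk (by omega)] at h
  linear_combination -h

lemma gtm_add_pow_mul_self (hk : 1 < k) {E : ℕ} {c : ZMod L}
    (hc : ∀ q, gtm k L (fun d y => κ d (y + E)) (q + 1) =
      gtm k L (fun d y => κ d (y + E)) q + c) (n : ℕ) :
    gtm k L κ (n + k ^ E * L) = gtm k L κ n := by
  have hshift : ∀ q r, gtm k L (fun d y => κ d (y + E)) (q + r) =
      gtm k L (fun d y => κ d (y + E)) q + r • c := fun q r => by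
    induction r with
    | zero => simp
    | succ r ih => rw [← add_assoc, hc, ih, succ_nsmul, add_assoc]
  have hlow : n % k ^ E < k ^ E := Nat.mod_lt n (by positivity)
  calc gtm k L κ (n + k ^ E * L) = gtm k L κ (n % k ^ E + k ^ E * (n / k ^ E + L)) := by
        rw [mul_add, ← add_assoc, Nat.mod_add_div]
    _ = gtm k L κ (n % k ^ E + k ^ E * (n / k ^ E)) := by
        rw [gtm_add_pow_mul κ hk hlow, gtm_add_pow_mul κ hk hlow, hshift, nsmul_eq_mul,
          ZMod.natCast_self, zero_mul, add_zero]
    _ = gtm k L κ n := by rw [Nat.mod_add_div]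

end ThueMorse

/-- if the generalized Thue–Morse sequence is not ultimately periodic,
then none of its equally spaced subsequences is ultimately periodic. -/
theorem stmt_12 (k L : ℕ) (hk : 1 < k) (hL : 1 < L) (κ : ℕ → ℕ → ZMod L)
    (hnp : ¬ ∃ N l : ℕ, 0 < l ∧ ∀ n : ℕ, N ≤ n → gtm k L κ n = gtm k L κ (n + l)) :
    ∀ N l : ℕ, 0 < l →
      ¬ ∃ M j : ℕ, 0 < j ∧ ∀ t : ℕ, M ≤ t →
        gtm k L κ (N + t * l) = gtm k L κ (N + (t + j) * l) := by
  rintro N l hl ⟨M, j, hj, hper⟩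
  obtain ⟨E, c, hc⟩ := exists_gtm_shift_succ κ hk hl hj hper
  exact hnp ⟨0, k ^ E * L, by positivity, fun n _ => (gtm_add_pow_mul_self κ hk hc n).symm⟩
end

section
/- Let k, L > 1 and κ : {1,…,k-1} → ℤ/L (position-independent). Define a(n) ≡ Σ_{s=1}^{k-1} κ(s)·e_s(n) (mod L), where e_s(n) counts occurrences of digit s in base k. Then (a(n))_{n≥0} is ultimately periodic if and only if s·κ(1) ≡ κ(s) (mod L) for all 1 ≤ s ≤ k-1 and κ(k-1) ≡ 0 (mod L). -/
/-!
Write `F` for the weighted digit count. If `v < k ^ m`, the digits of `v + k ^ m * u` are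
those of `v`, then zeros, then those of `u`, so `F (v + k ^ m * u) = F v + F u`. Given a
period `l` from `N` on, take `v = k ^ m - l` with `m` large: then `F v = F (k ^ m) = κ 1`, and
comparing `v + k ^ m * d` with `k ^ m * (d + 1)` gives `F (d + 1) = κ 1 + κ d` for every
nonzero digit `d`. For `d < k - 1` this is the recursion `κ (d + 1) = κ 1 + κ d`, and for
`d = k - 1` it reads `κ 1 = κ 1 + κ (k - 1)`. Conversely, if `κ s = s • κ 1` and
`(k - 1) • κ 1 = 0`, then `F n = n • κ 1` because `k ≡ 1` modulo `k - 1`, and this has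
period `k - 1`.
-/

open Finset

def EventuallyPeriodic {α : Type*} (f : ℕ → α) : Prop :=
  ∃ N l : ℕ, 0 < l ∧ ∀ n, N ≤ n → f n = f (n + l)

theorem Nat.count_digits_add_base_pow_mul {k m v : ℕ} (hk : 1 < k) (hv : v < k ^ m) (u : ℕ)
    {s : ℕ} (hs : s ≠ 0) :
    (Nat.digits k (v + k ^ m * u)).count s = (Nat.digits k v).count s + (Nat.digits k u).count s := by
  rcases Nat.eq_zero_or_pos u with rfl | hu
  · simp
  have hlen : (Nat.digits k v).length ≤ m := (Nat.digits_length_le_iff hk v).2 hv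
  have h := Nat.digits_append_zeroes_append_digits (k := m - (Nat.digits k v).length) (n := v) hk hu
  rw [Nat.add_sub_cancel' hlen] at h
  simp [← h, List.count_append, List.count_replicate, Ne.symm hs]

def digitWeight {M : Type*} [AddCommMonoid M] (κ : ℕ → M) (k n : ℕ) : M :=
  ∑ s ∈ Icc 1 (k - 1), (Nat.digits k n).count s • κ s

section DigitWeight

variable {M : Type*} [AddCommMonoid M] {k : ℕ} (κ : ℕ → M)

@[simp]
theorem digitWeight_zero : digitWeight κ k 0 = 0 := by
  simp [digitWeight]

theorem digitWeight_of_lt {d : ℕ} (hd : d ≠ 0) (hdk : d < k) : digitWeight κ k d = κ d := by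
  rw [digitWeight, Nat.digits_of_lt k d hd hdk, sum_eq_single_of_mem d (by simp; omega)]
  · simp
  · intro s _ hsd
    simp [Ne.symm hsd]

theorem digitWeight_add_base_pow_mul (hk : 1 < k) {m v : ℕ} (hv : v < k ^ m) (u : ℕ) :
    digitWeight κ k (v + k ^ m * u) = digitWeight κ k v + digitWeight κ k u := by
  simp only [digitWeight, ← sum_add_distrib, ← add_smul]
  refine sum_congr rfl fun s hs => ?_
  rw [Nat.count_digits_add_base_pow_mul hk hv u (by simp at hs; omega)]

theorem digitWeight_base_pow_mul (hk : 1 < k) (m u : ℕ) :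
    digitWeight κ k (k ^ m * u) = digitWeight κ k u := by
  simpa using digitWeight_add_base_pow_mul κ hk (pow_pos (by omega) m) u

theorem digitWeight_succ_of_eventuallyPeriodic (hk : 1 < k)
    (hper : EventuallyPeriodic (digitWeight κ k)) {d : ℕ} (hd : d ≠ 0) (hdk : d < k) :
    digitWeight κ k (d + 1) = κ 1 + κ d := by
  obtain ⟨N, l, hl, hper⟩ := hper
  set m := N + l
  have hm : N + l < k ^ m := Nat.lt_pow_self hk
  have hv : k ^ m - l + l = k ^ m := by omega
  have hF : digitWeight κ k (k ^ m - l) = κ 1 := by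
    rw [hper _ (by omega), hv, ← mul_one (k ^ m), digitWeight_base_pow_mul κ hk,
      digitWeight_of_lt κ one_ne_zero hk]
  calc digitWeight κ k (d + 1)
      = digitWeight κ k (k ^ m - l + k ^ m * d + l) := by
        rw [add_right_comm, hv, ← mul_one_add, add_comm 1, digitWeight_base_pow_mul κ hk]
    _ = digitWeight κ k (k ^ m - l + k ^ m * d) := (hper _ (by omega)).symm
    _ = κ 1 + κ d := by
        rw [digitWeight_add_base_pow_mul κ hk (by omega), hF, digitWeight_of_lt κ hd hdk]

theorem nsmul_eq_of_eventuallyPeriodic (hk : 1 < k)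
    (hper : EventuallyPeriodic (digitWeight κ k)) :
    ∀ s, 1 ≤ s → s ≤ k - 1 → s • κ 1 = κ s := by
  intro s hs1 hsk
  induction s, hs1 using Nat.le_induction with
  | base => exact one_nsmul _
  | succ s hs1 ih =>
    rw [succ_nsmul', ih (by omega), ← digitWeight_succ_of_eventuallyPeriodic κ hk hper
      (by omega) (by omega), digitWeight_of_lt κ (by omega) (by omega)]

theorem digitWeight_eq_nsmul (hk : 1 < k)
    (hκ : ∀ s, 1 ≤ s → s ≤ k - 1 → s • κ 1 = κ s) (hκk : (k - 1) • κ 1 = 0) (n : ℕ) :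
    digitWeight κ k n = n • κ 1 := by
  induction n using Nat.strong_induction_on with
  | _ n ih =>
    rcases Nat.eq_zero_or_pos n with rfl | hn
    · simp
    have hmod : n % k < k := Nat.mod_lt n (by omega)
    have hdigit : digitWeight κ k (n % k) = (n % k) • κ 1 := by
      rcases Nat.eq_zero_or_pos (n % k) with h0 | h0
      · simp [h0]
      · rw [digitWeight_of_lt κ h0.ne' hmod, hκ _ h0 (by omega)]
    have hshift : (k * (n / k)) • κ 1 = (n / k) • κ 1 := by
      obtain ⟨j, hj⟩ : ∃ j, k = j + 1 := ⟨k - 1, by omega⟩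
      have hj' : j • κ 1 = 0 := by simpa [hj] using hκk
      rw [hj, add_one_mul, add_nsmul, mul_nsmul, hj', nsmul_zero, zero_add]
    calc digitWeight κ k n
        = digitWeight κ k (n % k + k ^ 1 * (n / k)) := by rw [pow_one, Nat.mod_add_div]
      _ = (n % k) • κ 1 + (n / k) • κ 1 := by
        rw [digitWeight_add_base_pow_mul κ hk (by simpa using hmod), hdigit,
          ih _ (Nat.div_lt_self hn hk)]
      _ = n • κ 1 := by rw [← hshift, ← add_nsmul, Nat.mod_add_div]

theorem periodic_digitWeight (hk : 1 < k)
    (hκ : ∀ s, 1 ≤ s → s ≤ k - 1 → s • κ 1 = κ s) (hκk : (k - 1) • κ 1 = 0) :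
    Function.Periodic (digitWeight κ k) (k - 1) := fun n => by
  simp only [digitWeight_eq_nsmul κ hk hκ hκk, add_nsmul, hκk, add_zero]

end DigitWeight

theorem eventuallyPeriodic_digitWeight_iff {M : Type*} [AddCancelCommMonoid M] (κ : ℕ → M)
    {k : ℕ} (hk : 1 < k) : EventuallyPeriodic (digitWeight κ k) ↔
      (∀ s, 1 ≤ s → s ≤ k - 1 → s • κ 1 = κ s) ∧ κ (k - 1) = 0 := by
  constructor
  · intro hper
    refine ⟨nsmul_eq_of_eventuallyPeriodic κ hk hper, ?_⟩
    have h := digitWeight_succ_of_eventuallyPeriodic κ hk hper (d := k - 1) (by omega) (by omega)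
    have hFk : digitWeight κ k k = κ 1 := by
      simpa [digitWeight_of_lt κ one_ne_zero hk] using digitWeight_base_pow_mul κ hk 1 1
    rwa [Nat.sub_add_cancel hk.le, hFk, left_eq_add] at h
  · rintro ⟨hκ, hκk⟩
    have hκk' : (k - 1) • κ 1 = 0 := by rw [hκ _ (by omega) le_rfl, hκk]
    exact ⟨0, k - 1, by omega, fun n _ =>
      (periodic_digitWeight κ hk hκ hκk' n).symm⟩

theorem stmt_13_general (k L : ℕ) (hk : 1 < k) (κ : ℕ → ZMod L) :
    (∃ N l : ℕ, 0 < l ∧ ∀ n : ℕ, N ≤ n →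
      (∑ s ∈ Finset.Icc 1 (k - 1), κ s * ((Nat.digits k n).count s : ZMod L)) =
      (∑ s ∈ Finset.Icc 1 (k - 1), κ s * ((Nat.digits k (n + l)).count s : ZMod L))) ↔
    ((∀ s : ℕ, 1 ≤ s → s ≤ k - 1 → (s : ZMod L) * κ 1 = κ s) ∧ κ (k - 1) = 0) := by
  simp only [← nsmul_eq_mul', ← nsmul_eq_mul]
  exact eventuallyPeriodic_digitWeight_iff κ hk

/-- with position-independent weights κ : {1,…,k-1} → ℤ/L and
a(n) = Σ_{s=1}^{k-1} κ(s)·e_s(n) (mod L), where e_s(n) counts occurrences of the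
digit s in base k, the sequence a is ultimately periodic iff s·κ(1) ≡ κ(s) (mod L)
for all 1 ≤ s ≤ k-1 and κ(k-1) ≡ 0 (mod L). -/
theorem stmt_13 (k L : ℕ) (hk : 1 < k) (hL : 1 < L) (κ : ℕ → ZMod L) :
    (∃ N l : ℕ, 0 < l ∧ ∀ n : ℕ, N ≤ n →
      (∑ s ∈ Finset.Icc 1 (k - 1), κ s * ((Nat.digits k n).count s : ZMod L)) =
      (∑ s ∈ Finset.Icc 1 (k - 1), κ s * ((Nat.digits k (n + l)).count s : ZMod L))) ↔
    ((∀ s : ℕ, 1 ≤ s → s ≤ k - 1 → (s : ZMod L) * κ 1 = κ s) ∧ κ (k - 1) = 0) :=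
  stmt_13_general k L hk κ
end

section
/- Let k, L > 1, κ : {1,…,k-1} × ℕ → ℤ/L, and let a be the generalized Thue–Morse sequence of type (L,k,κ) taking values in {0,…,L-1}. Suppose there is no A ∈ ℕ with κ(s,A+y) ≡ κ(1,A)·s·k^y (mod L) for all s, y. Then for every integer β ≥ L and all N ≥ 0, l > 0, the real number Σ_{n≥0} a(N + n·l)/β^{n+1} is irrational. -/
/-!
Write `gᵣ` for the sequence `gtm k L κ` read with digit positions shifted by `r`, so that
`gtm (w * k ^ r + v) = gᵣ w + gtm v` for `v < k ^ r`.

If the sum were rational, its base-`β` digits `a (N + n * l)` would be eventually periodic in `n`: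
a rational number has only finitely many distinct tails, and a tail `< 1` determines its leading
digit. So `gtm (m + D) = gtm m` for all large `m ≡ N [MOD l]`, with `l ∣ D`. Splitting `m` as above
shows that for large `r` the increment `gᵣ (w + 1) - gᵣ w` depends only on `(w + 1) * k ^ r`
modulo `l`. Choosing `c > 0` with `k ^ (r + c) ≡ k ^ r [MOD l]`, the arguments `s` and `s * k ^ c`
have the same residue, and the increment at `s * k ^ c`, a number whose last digit is `0`, is
`κ 1 r`. Hence `gᵣ s = s * κ 1 r`, and `gᵣ k = gᵣ₊₁ 1` gives `κ 1 (r + 1) = k * κ 1 r`.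
-/

open scoped BigOperators

theorem gtm_zero (k L : ℕ) (κ : ℕ → ℕ → ZMod L) : gtm k L κ 0 = 0 := by
  simp [gtm]

section DigitBlocks

variable {k L : ℕ} (hk : 1 < k)
include hk

theorem gtm_eq_ite_add_gtm_div (κ : ℕ → ℕ → ZMod L) (n : ℕ) :
    gtm k L κ n =
      (if n % k ≠ 0 then κ (n % k) 0 else 0) + gtm k L (fun s y ↦ κ s (1 + y)) (n / k) := by
  rcases Nat.eq_zero_or_pos n with rfl | hn
  · simp [gtm]
  rw [gtm, gtm, Nat.digits_def' hk hn, List.length_cons, Finset.sum_range_succ']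
  simp only [List.getD_cons_succ, List.getD_cons_zero, add_comm 1]
  rw [add_comm]

theorem gtm_mul_pow_add (κ : ℕ → ℕ → ZMod L) (j u : ℕ) {v : ℕ} (hv : v < k ^ j) :
    gtm k L κ (u * k ^ j + v) = gtm k L (fun s y ↦ κ s (j + y)) u + gtm k L κ v := by
  induction j generalizing κ v with
  | zero =>
    obtain rfl : v = 0 := by simpa using hv
    simp [gtm]
  | succ j ih =>
    have hk0 : 0 < k := by omega
    have hmod : (u * k ^ (j + 1) + v) % k = v % k := by
      rw [pow_succ, ← mul_assoc, add_comm, Nat.add_mul_mod_self_right]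
    have hdiv : (u * k ^ (j + 1) + v) / k = u * k ^ j + v / k := by
      rw [pow_succ, ← mul_assoc, add_comm, Nat.add_mul_div_right _ _ hk0, add_comm]
    have hvk : v / k < k ^ j := by
      rwa [Nat.div_lt_iff_lt_mul hk0, ← pow_succ]
    rw [gtm_eq_ite_add_gtm_div hk κ, hmod, hdiv, ih _ hvk, gtm_eq_ite_add_gtm_div hk κ v]
    have : (fun s y ↦ κ s (1 + (j + y))) = fun s y ↦ κ s (j + 1 + y) := by
      funext s y; rw [add_left_comm, add_assoc]
    rw [this]
    abel

theorem gtm_of_lt (κ : ℕ → ℕ → ZMod L) {s : ℕ} (hs : s ≠ 0) (hsk : s < k) :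
    gtm k L κ s = κ s 0 := by
  rw [gtm_eq_ite_add_gtm_div hk, Nat.mod_eq_of_lt hsk, Nat.div_eq_of_lt hsk, if_pos hs]
  simp [gtm]

theorem gtm_mul_add_of_lt (κ : ℕ → ℕ → ZMod L) (t : ℕ) {v : ℕ} (hv : v < k) :
    gtm k L κ (t * k + v) = gtm k L (fun s y ↦ κ s (1 + y)) t + gtm k L κ v := by
  simpa using gtm_mul_pow_add hk κ 1 t (by simpa using hv)

theorem gtm_mul_base (κ : ℕ → ℕ → ZMod L) (t : ℕ) :
    gtm k L κ (t * k) = gtm k L (fun s y ↦ κ s (1 + y)) t := by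
  simpa [gtm_zero] using gtm_mul_add_of_lt hk κ t (v := 0) (by omega)

end DigitBlocks

section PeriodicOnResidueClass

variable {k L : ℕ} (hk : 1 < k) (κ : ℕ → ℕ → ZMod L) {l D M N : ℕ} (hlD : l ≤ D)
  (hper : ∀ m, M ≤ m → (m : ZMod l) = N → gtm k L κ (m + D) = gtm k L κ m)
include hk hlD hper

theorem gtm_succ_sub_gtm_eq {r w e : ℕ} (hbig : M + D < k ^ r) (hw : 1 ≤ w) (he : 1 ≤ e)
    (hel : e ≤ l) (hres : (N + e : ZMod l) = (w + 1) * k ^ r) :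
    gtm k L (fun s y ↦ κ s (r + y)) (w + 1) - gtm k L (fun s y ↦ κ s (r + y)) w =
      gtm k L κ (k ^ r - e) - gtm k L κ (D - e) := by
  have hexp : (w + 1) * k ^ r = w * k ^ r + k ^ r := by ring
  have hwk : k ^ r ≤ w * k ^ r := Nat.le_mul_of_pos_left _ hw
  obtain ⟨m, hme⟩ : ∃ m, m + e = (w + 1) * k ^ r := ⟨(w + 1) * k ^ r - e, by omega⟩
  have hm : (m : ZMod l) = N := by
    apply add_right_cancel (b := (e : ZMod l))
    rw [hres]
    exact_mod_cast congrArg (Nat.cast : ℕ → ZMod l) hme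
  have := hper m (by omega) hm
  rw [show m + D = (w + 1) * k ^ r + (D - e) by omega,
    show m = w * k ^ r + (k ^ r - e) by omega, gtm_mul_pow_add hk _ r _ (by omega),
    gtm_mul_pow_add hk _ r _ (by omega)] at this
  linear_combination this

theorem gtm_succ_eq_add [NeZero l] {r c : ℕ} (hbig : M + D < k ^ r) (hc : 0 < c)
    (hcyc : (k : ZMod l) ^ (r + c) = k ^ r) (s : ℕ) :
    gtm k L (fun s y ↦ κ s (r + y)) (s + 1) = gtm k L (fun s y ↦ κ s (r + y)) s + κ 1 r := by
  rcases Nat.eq_zero_or_pos s with rfl | hs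
  · simp [gtm_of_lt hk _ one_ne_zero hk, gtm_zero]
  have hresidue (w : ℕ) (hw : 1 ≤ w) (hwres : (w + 1 : ZMod l) * k ^ r = (s + 1) * k ^ r) :
      gtm k L (fun s y ↦ κ s (r + y)) (w + 1) - gtm k L (fun s y ↦ κ s (r + y)) w =
        gtm k L (fun s y ↦ κ s (r + y)) (s + 1) - gtm k L (fun s y ↦ κ s (r + y)) s := by
    set e := (((s + 1 : ZMod l) * k ^ r) - N - 1).val + 1
    have hres : (N + e : ZMod l) = (s + 1) * k ^ r := by
      simp [e, ZMod.natCast_val]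
    rw [gtm_succ_sub_gtm_eq hk κ hlD hper hbig hw (by omega) (ZMod.val_lt _)
      (hres.trans hwres.symm),
      gtm_succ_sub_gtm_eq hk κ hlD hper hbig hs (by omega) (ZMod.val_lt _) hres]
  obtain ⟨t, ht⟩ : ∃ t, t * k = s * k ^ c :=
    ⟨s * k ^ (c - 1), by rw [mul_assoc, ← pow_succ, Nat.sub_add_cancel hc]⟩
  have hmul : ((t * k : ℕ) + 1 : ZMod l) * k ^ r = (s + 1) * k ^ r := by
    rw [ht, add_mul, add_mul]
    push_cast
    rw [mul_assoc, ← pow_add, add_comm c, hcyc]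
  have := hresidue (t * k) (Nat.one_le_iff_ne_zero.2 (by rw [ht]; positivity)) hmul
  rw [gtm_mul_add_of_lt hk _ _ hk, gtm_mul_base hk,
    gtm_of_lt hk _ one_ne_zero hk, add_zero] at this
  linear_combination -this

theorem gtm_eq_mul [NeZero l] {r c : ℕ} (hbig : M + D < k ^ r) (hc : 0 < c)
    (hcyc : (k : ZMod l) ^ (r + c) = k ^ r) (s : ℕ) :
    gtm k L (fun s y ↦ κ s (r + y)) s = s * κ 1 r := by
  induction s with
  | zero => simp [gtm_zero]
  | succ s ih =>
    rw [gtm_succ_eq_add hk κ hlD hper hbig hc hcyc, ih]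
    push_cast
    ring

theorem exists_kappa_eq_mul_pow (hl : 0 < l) :
    ∃ A, ∀ s y : ℕ, 1 ≤ s → s ≤ k - 1 →
      κ s (A + y) = κ 1 A * (s : ZMod L) * (k : ZMod L) ^ y := by
  have : NeZero l := ⟨hl.ne'⟩
  obtain ⟨i, j, hij, hpow⟩ := Set.finite_univ.exists_lt_map_eq_of_forall_mem
    (f := fun n ↦ (k : ZMod l) ^ n) (fun _ ↦ Set.mem_univ _)
  set R := i + (M + D)
  have hlin (y s : ℕ) : gtm k L (fun s y' ↦ κ s (R + y + y')) s = s * κ 1 (R + y) := by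
    refine gtm_eq_mul hk κ hlD hper ((by omega : M + D ≤ R + y).trans_lt (Nat.lt_pow_self hk))
      (c := j - i) (by omega) ?_ s
    rw [show R + y + (j - i) = (M + D + y) + j by omega, pow_add, ← hpow, ← pow_add]
    congr 1
    omega
  have hgeom (y : ℕ) : κ 1 (R + y) = κ 1 R * k ^ y := by
    induction y with
    | zero => simp
    | succ y ih =>
      have h := gtm_mul_base hk (fun s y' ↦ κ s (R + y + y')) 1
      rw [one_mul, hlin, gtm_of_lt hk _ one_ne_zero hk] at h
      rw [show R + (y + 1) = R + y + (1 + 0) by omega, ← h, ih, pow_succ]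
      ring
  refine ⟨R, fun s y hs hsk => ?_⟩
  have h := gtm_of_lt hk (fun s y' ↦ κ s (R + y + y')) (s := s) (by omega) (by omega)
  rw [hlin, hgeom, add_zero] at h
  rw [← h]
  ring

end PeriodicOnResidueClass

namespace Real

variable {b : ℕ} (a : ℕ → Fin b)

theorem ofDigits_shift_eq_div (n : ℕ) :
    ofDigits (fun i ↦ a (i + n)) = (a n + ofDigits (fun i ↦ a (i + (n + 1)))) / b := by
  have hb : (b : ℝ) ≠ 0 := by exact_mod_cast (Fin.pos (a 0)).ne'
  rw [ofDigits_eq_sum_add_ofDigits _ 1]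
  simp only [Finset.sum_range_one, ofDigitsTerm, zero_add, pow_one, add_assoc, add_comm 1 n]
  field_simp

theorem ofDigits_lt_one {i : ℕ} (hi : (a i : ℕ) + 1 < b) : ofDigits a < 1 := by
  have hb : 1 < b := by omega
  rw [← ofDigits_const_last_eq_one' hb]
  refine Summable.tsum_lt_tsum (i := i) (fun n ↦ ?_) ?_ summable_ofDigitsTerm
    summable_ofDigitsTerm
  · simpa [ofDigitsTerm, Nat.cast_sub hb.le] using ofDigitsTerm_le (digits := a) (n := n)
  · simp only [ofDigitsTerm]
    gcongr
    omega

theorem eq_of_ofDigits_shift_eq {m n : ℕ}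
    (h : ofDigits (fun i ↦ a (i + m)) = ofDigits (fun i ↦ a (i + n)))
    (hm : ofDigits (fun i ↦ a (i + (m + 1))) < 1) (hn : ofDigits (fun i ↦ a (i + (n + 1))) < 1) :
    a m = a n ∧ ofDigits (fun i ↦ a (i + (m + 1))) = ofDigits (fun i ↦ a (i + (n + 1))) := by
  have hb : (b : ℝ) ≠ 0 := by exact_mod_cast (Fin.pos (a 0)).ne'
  rw [ofDigits_shift_eq_div a m, ofDigits_shift_eq_div a n, div_left_inj' hb] at h
  have hfloor (d : ℕ) (x : ℝ) (hx : 0 ≤ x) (hx1 : x < 1) : ⌊(d : ℝ) + x⌋₊ = d := by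
    rw [add_comm, Nat.floor_add_natCast hx, Nat.floor_eq_zero.2 hx1, zero_add]
  have hdigit : (a m : ℕ) = a n := by
    have := congrArg Nat.floor h
    rwa [hfloor _ _ (ofDigits_nonneg _) hm, hfloor _ _ (ofDigits_nonneg _) hn] at this
  refine ⟨Fin.ext hdigit, ?_⟩
  rw [hdigit] at h
  linarith

theorem exists_lt_ofDigits_shift_eq (h : ¬ Irrational (ofDigits a)) :
    ∃ i j, i < j ∧ ofDigits (fun k ↦ a (k + i)) = ofDigits (fun k ↦ a (k + j)) := by
  have hb : (b : ℝ) ≠ 0 := by exact_mod_cast (Fin.pos (a 0)).ne'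
  obtain ⟨q, hq⟩ : ∃ q : ℚ, (q : ℝ) = ofDigits a := by simpa [Irrational] using h
  have hint (n : ℕ) : ∃ z : ℤ, ofDigits (fun i ↦ a (i + n)) * q.den = z := by
    induction n with
    | zero => exact ⟨q.num, by simp [← hq, Rat.cast_def]⟩
    | succ n ih =>
      obtain ⟨z, hz⟩ := ih
      refine ⟨b * z - (a n : ℕ) * q.den, ?_⟩
      have := ofDigits_shift_eq_div a n
      rw [eq_div_iff hb] at this
      simp only [Int.cast_sub, Int.cast_mul, Int.cast_natCast]
      rw [← hz]
      generalize ofDigits (fun i ↦ a (i + (n + 1))) = t at this ⊢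
      linear_combination -(q.den : ℝ) * this
  refine Set.Finite.exists_lt_map_eq_of_forall_mem
    (t := (fun z : ℤ ↦ (z : ℝ) / q.den) '' Set.Icc 0 q.den) (fun n ↦ ?_)
    ((Set.finite_Icc _ _).image _)
  obtain ⟨z, hz⟩ := hint n
  have hden : (0 : ℝ) < q.den := by exact_mod_cast q.den_pos
  refine ⟨z, ⟨?_, ?_⟩, ?_⟩
  · have : (0 : ℝ) ≤ z := hz ▸ mul_nonneg (ofDigits_nonneg _) hden.le
    exact_mod_cast this
  · have : (z : ℝ) ≤ q.den := hz ▸ mul_le_of_le_one_left hden.le (ofDigits_le_one _)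
    exact_mod_cast this
  · show (z : ℝ) / q.den = _
    rw [← hz, mul_div_cancel_right₀ _ hden.ne']

theorem exists_periodic_of_not_irrational_ofDigits (h : ¬ Irrational (ofDigits a)) :
    ∃ p > 0, ∃ n₀, ∀ n ≥ n₀, a (n + p) = a n := by
  by_cases hlast : ∃ n₀, ∀ n ≥ n₀, (a n : ℕ) + 1 = b
  · obtain ⟨n₀, hn₀⟩ := hlast
    refine ⟨1, one_pos, n₀, fun n hn ↦ Fin.ext ?_⟩
    have := hn₀ n hn
    have := hn₀ (n + 1) (by omega)
    omega
  push Not at hlast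
  have htail (n : ℕ) : ofDigits (fun i ↦ a (i + n)) < 1 := by
    obtain ⟨i, hi, hne⟩ := hlast n
    refine ofDigits_lt_one _ (i := i - n) ?_
    simp only [Nat.sub_add_cancel hi]
    have := (a i).isLt
    omega
  obtain ⟨i, j, hij, heq⟩ := exists_lt_ofDigits_shift_eq a h
  have hshift (m : ℕ) :
      ofDigits (fun k ↦ a (k + (i + m))) = ofDigits (fun k ↦ a (k + (j + m))) := by
    induction m with
    | zero => exact heq
    | succ m ih => exact (eq_of_ofDigits_shift_eq a ih (htail _) (htail _)).2
  refine ⟨j - i, by omega, i, fun n hn ↦ ?_⟩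
  have := (eq_of_ofDigits_shift_eq a (hshift (n - i)) (htail _) (htail _)).1
  rwa [show i + (n - i) = n by omega, show j + (n - i) = n + (j - i) by omega, eq_comm] at this

end Real

/-- if κ satisfies no relation κ(s,A+y) ≡ κ(1,A)·s·kʸ (mod L), then
for every β ≥ L, N ≥ 0 and l > 0, Σ_n a(N+n·l)/β^{n+1} is irrational, where
a(n) ∈ {0,…,L-1} is the canonical representative of gtm. -/
theorem stmt_17 (k L : ℕ) (hk : 1 < k) (hL : 1 < L) (κ : ℕ → ℕ → ZMod L)
    (hnp : ¬ ∃ A : ℕ, ∀ s y : ℕ, 1 ≤ s → s ≤ k - 1 →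
      κ s (A + y) = κ 1 A * (s : ZMod L) * (k : ZMod L) ^ y) :
    ∀ β : ℕ, L ≤ β → ∀ N l : ℕ, 0 < l →
      Irrational (∑' n : ℕ, ((gtm k L κ (N + n * l)).val : ℝ) / (β : ℝ) ^ (n + 1)) := by
  intro β hβL N l hl
  have : NeZero L := ⟨by omega⟩
  set a : ℕ → Fin β := fun n ↦ ⟨(gtm k L κ (N + n * l)).val, (ZMod.val_lt _).trans_le hβL⟩
  have hsum : ∑' n : ℕ, ((gtm k L κ (N + n * l)).val : ℝ) / (β : ℝ) ^ (n + 1) =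
      Real.ofDigits a :=
    tsum_congr fun n ↦ by simp [Real.ofDigitsTerm, a, div_eq_mul_inv]
  rw [hsum]
  by_contra hrat
  obtain ⟨p, hp, n₀, hper⟩ := Real.exists_periodic_of_not_irrational_ofDigits a hrat
  refine hnp (exists_kappa_eq_mul_pow hk κ (M := N + n₀ * l) (N := N)
    (Nat.le_mul_of_pos_left l hp) (fun m hm hmN ↦ ?_) hl)
  obtain ⟨n, hn⟩ : l ∣ m - N :=
    (Nat.modEq_iff_dvd' (by omega)).1 ((ZMod.natCast_eq_natCast_iff _ _ _).1 hmN).symm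
  obtain rfl : m = N + n * l := by rw [mul_comm]; omega
  have hn₀ : n₀ ≤ n := Nat.le_of_mul_le_mul_right (by omega) hl
  rw [add_assoc, ← add_mul]
  exact ZMod.val_injective _ (congrArg Fin.val (hper n hn₀))
end
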